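/- For the ideal B_M of meager downward-closed subsets of [ω]^ω: add(B_M) = unif(B_M) = 𝔟 and cov(B_M) = cof(B_M) = 𝔡. -/

import Mathlib

open Set Cardinal MeasureTheory

/-- The characteristic function of a set of naturals, as a point of Cantor space `2^ω`. -/
noncomputable def chi (x : Set ℕ) : ℕ → Bool := fun n => @decide (n ∈ x) (Classical.dec _)

/-- `[ω]^ω`: the collection of infinite subsets of ω. -/
def InfSets : Set (Set ℕ) := {x : Set ℕ | x.Infinite}

/-- `X ⊆ [ω]^ω` is downward closed for almost-inclusion `x ≤ y ↔ (x \ y).Finite`. -/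
def DownClosed (X : Set (Set ℕ)) : Prop :=
  ∀ y ∈ X, ∀ x : Set ℕ, x.Infinite → (x \ y).Finite → x ∈ X

/-- `X` is meager as a subset of Cantor space `2^ω` (product topology on `ℕ → Bool`). -/
def MeagerSet (X : Set (Set ℕ)) : Prop := IsMeagre (chi '' X)

/-- A partition of ω into consecutive finite intervals `I n = [e n, e (n+1))`. -/
structure IntervalPartition where
  e : ℕ → ℕ
  zero : e 0 = 0
  mono : StrictMono e

/-- The `n`-th interval of an interval partition. -/
def IntervalPartition.I (P : IntervalPartition) (n : ℕ) : Set ℕ :=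
  Set.Ico (P.e n) (P.e (n + 1))

/-- `X ⊆ [ω]^ω` is groupwise dense: downward closed, and for every partition of ω into
finite intervals, the union of some infinitely many of the intervals belongs to `X`. -/
def GroupwiseDense (X : Set (Set ℕ)) : Prop :=
  X ⊆ InfSets ∧ DownClosed X ∧
    ∀ P : IntervalPartition, ∃ A : Set ℕ, A.Infinite ∧ (⋃ n ∈ A, P.I n) ∈ X

/-- `g` eventually majorizes `f`. -/
def EvMaj (f g : ℕ → ℕ) : Prop := ∀ᶠ k in Filter.atTop, f k ≤ g k

/-- `M(Π)`: the infinite subsets of ω including only finitely many intervals of `Π`. -/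
def MSet (P : IntervalPartition) : Set (Set ℕ) :=
  {x : Set ℕ | x.Infinite ∧ {n : ℕ | P.I n ⊆ x}.Finite}

/-- The index `n` of the interval `I n` of `P` containing `k`. -/
def idx (P : IntervalPartition) (k : ℕ) : ℕ := Nat.findGreatest (fun n => P.e n ≤ k) k

/-- `F_Π(k)`: the largest element of `I (n+2)`, where `k ∈ I n`. -/
def FPart (P : IntervalPartition) (k : ℕ) : ℕ := P.e (idx P k + 3) - 1

/-- The groupwise density number 𝔤. -/
noncomputable def gNum : Cardinal :=
  sInf {c : Cardinal | ∃ S : Set (Set (Set ℕ)), (∀ G ∈ S, GroupwiseDense G) ∧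
    #S = c ∧ InfSets ∩ ⋂₀ S = ∅}

/-- The bounding number 𝔟. -/
noncomputable def bNum : Cardinal :=
  sInf {c : Cardinal | ∃ F : Set (ℕ → ℕ), #F = c ∧ ∀ g : ℕ → ℕ, ∃ f ∈ F, ¬ EvMaj f g}

/-- The dominating number 𝔡. -/
noncomputable def dNum : Cardinal :=
  sInf {c : Cardinal | ∃ F : Set (ℕ → ℕ), #F = c ∧ ∀ g : ℕ → ℕ, ∃ f ∈ F, EvMaj g f}

/-- `B_M`: the ideal of meager downward-closed subsets of `[ω]^ω`. -/
def BM : Set (Set (Set ℕ)) := {X : Set (Set ℕ) | X ⊆ InfSets ∧ DownClosed X ∧ MeagerSet X}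

/-- `add(B_M)`. -/
noncomputable def addBM : Cardinal :=
  sInf {c : Cardinal | ∃ S : Set (Set (Set ℕ)), S ⊆ BM ∧ #S = c ∧ ⋃₀ S ∉ BM}

/-- `cov(B_M)`. -/
noncomputable def covBM : Cardinal :=
  sInf {c : Cardinal | ∃ S : Set (Set (Set ℕ)), S ⊆ BM ∧ #S = c ∧
    {x : Set ℕ | x.Infinite ∧ xᶜ.Infinite} ⊆ ⋃₀ S}

/-- `unif(B_M)`. -/
noncomputable def unifBM : Cardinal :=
  sInf {c : Cardinal | ∃ S : Set (Set ℕ), (∀ x ∈ S, x.Infinite ∧ xᶜ.Infinite) ∧ #S = c ∧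
    ∀ X ∈ BM, ¬ S ⊆ X}

/-- `cof(B_M)`. -/
noncomputable def cofBM : Cardinal :=
  sInf {c : Cardinal | ∃ C : Set (Set (Set ℕ)), C ⊆ BM ∧ #C = c ∧
    ∀ X ∈ BM, ∃ Y ∈ C, X ⊆ Y}

/-- `X ⊆ [ω]^ω` is dense: every infinite `A` has an infinite subset `B ∈ X`. -/
def DenseM (X : Set (Set ℕ)) : Prop :=
  ∀ A : Set ℕ, A.Infinite → ∃ B ⊆ A, B.Infinite ∧ B ∈ X

/-- 𝔤′: the least number of non-meager downward-closed ideals on ω with empty intersection. -/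
noncomputable def gNum' : Cardinal :=
  sInf {c : Cardinal | ∃ S : Set (Set (Set ℕ)),
    (∀ X ∈ S, X ⊆ InfSets ∧ DownClosed X ∧ (∀ x ∈ X, ∀ y ∈ X, x ∪ y ∈ X) ∧ ¬ MeagerSet X) ∧
    #S = c ∧ InfSets ∩ ⋂₀ S = ∅}

/-- The splitting number 𝔰. -/
noncomputable def sNum : Cardinal :=
  sInf {c : Cardinal | ∃ S : Set (Set ℕ), #S = c ∧
    ∀ x : Set ℕ, x.Infinite → ∃ y ∈ S, (x ∩ y).Infinite ∧ (x \ y).Infinite}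

/-!
Talagrand: every meagre downward-closed family `X` lies inside `M(Π)` for some interval
partition `Π`. Indeed a meagre subset of Cantor space is avoided by every point that copies a
fixed pattern `z` on infinitely many intervals of a suitable partition `Π`, and a set including
infinitely many intervals of `Π` can be shrunk, inside `X`, to such a point.

The families `M(Π)` are then compared with functions: `M(Π) ⊆ M(Π_g)` as soon as `F_Π ≤* g`,
where the intervals of `Π_g` outgrow `g`, while the set of non-left-endpoints of `Π_f`, which
lies in `M(Π_f)`, belongs to `M(Π)` only if `f ≤* F_Π`. So `X ↦ F_Π` and `f ↦ M(Π_f)` transfer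
bounded and dominating families between `B_M` and `(ω^ω, ≤*)` in both directions.
-/

open Filter

lemma Nat.finite_setOf_iff_eventually_not {p : ℕ → Prop} :
    {n | p n}.Finite ↔ ∀ᶠ n in atTop, ¬ p n := by
  simp [← Nat.cofinite_eq_atTop, Filter.eventually_cofinite]

lemma csInf_eq_of_mem_of_le {α : Type*} [ConditionallyCompleteLinearOrderBot α] {s : Set α}
    {a c : α} (hc : c ∈ s) (hca : c ≤ a) (h : ∀ b ∈ s, a ≤ b) : sInf s = a :=
  le_antisymm ((csInf_le' hc).trans hca) (le_csInf ⟨c, hc⟩ h)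

namespace IntervalPartition

variable {P Q : IntervalPartition} {f g : ℕ → ℕ}

lemma e_mem_I (P : IntervalPartition) (n : ℕ) : P.e n ∈ P.I n := ⟨le_rfl, P.mono n.lt_succ_self⟩

lemma le_of_e_le_of_mem_I {k m n : ℕ} (hm : P.e m ≤ k) (hn : k ∈ P.I n) : m ≤ n :=
  Nat.lt_succ_iff.1 (P.mono.lt_iff_lt.1 (hm.trans_lt hn.2))

lemma eq_of_mem_I {k m n : ℕ} (hm : k ∈ P.I m) (hn : k ∈ P.I n) : m = n :=
  le_antisymm (le_of_e_le_of_mem_I hm.1 hn) (le_of_e_le_of_mem_I hn.1 hm)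

lemma mem_I_idx (k : ℕ) : k ∈ P.I (idx P k) := by
  have hk : P.e 0 ≤ k := by simp [P.zero]
  refine ⟨Nat.findGreatest_spec (P := fun n => P.e n ≤ k) (m := 0) k.zero_le hk, ?_⟩
  by_contra h
  exact Nat.findGreatest_is_greatest (idx P k).lt_succ_self
    ((P.mono.le_apply).trans (not_lt.1 h)) (not_lt.1 h)

lemma idx_eq_of_mem_I {k n : ℕ} (h : k ∈ P.I n) : idx P k = n := eq_of_mem_I (mem_I_idx k) h

lemma le_idx_of_e_le {k m : ℕ} (h : P.e m ≤ k) : m ≤ idx P k :=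
  le_of_e_le_of_mem_I h (mem_I_idx k)

lemma tendsto_idx : Tendsto (idx P) atTop atTop :=
  tendsto_atTop_atTop.2 fun m => ⟨P.e m, fun _ => le_idx_of_e_le⟩

lemma le_FPart_iff {a k : ℕ} : a ≤ FPart P k ↔ a < P.e (idx P k + 3) := by
  have := P.mono.le_apply (x := idx P k + 3)
  unfold FPart
  omega

def ofStep (next : ℕ → ℕ → ℕ) (h : ∀ n a, a < next n a) : IntervalPartition where
  e n := Nat.rec 0 next n
  zero := rfl
  mono := strictMono_nat_of_lt_succ fun n => h n _

/-- The `+ 2` leaves a non-endpoint in every interval; the `sup` makes `f` smaller than the next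
endpoint on everything up to the current one. -/
def ofFun (f : ℕ → ℕ) : IntervalPartition :=
  ofStep (fun _ a => a + 2 + (Finset.range (a + 1)).sup f) fun _ _ => by omega

lemma ofFun_e_succ (n : ℕ) :
    (ofFun f).e (n + 1) = (ofFun f).e n + 2 + (Finset.range ((ofFun f).e n + 1)).sup f :=
  rfl

lemma lt_ofFun_e_succ {k n : ℕ} (hk : k ≤ (ofFun f).e n) : f k < (ofFun f).e (n + 1) := by
  have := Finset.le_sup (f := f) (Finset.mem_range.2 (show k < (ofFun f).e n + 1 by omega))
  rw [ofFun_e_succ]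
  omega

lemma ofFun_e_add_two_le (n : ℕ) : (ofFun f).e n + 2 ≤ (ofFun f).e (n + 1) := by
  rw [ofFun_e_succ]
  omega

lemma MSet_subset_MSet {ψ : ℕ → ℕ} (h : ∀ᶠ n in atTop, P.I (ψ n) ⊆ Q.I n) :
    MSet P ⊆ MSet Q := by
  rintro x ⟨hx, hfin⟩
  refine ⟨hx, ?_⟩
  have hinj : InjOn ψ {n | P.I (ψ n) ⊆ Q.I n} := fun m hm n hn hmn =>
    eq_of_mem_I (hm (P.e_mem_I _)) (hmn ▸ hn (P.e_mem_I _))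
  have hgood : {n | P.I (ψ n) ⊆ Q.I n ∧ Q.I n ⊆ x}.Finite :=
    Finite.of_finite_image (hfin.subset (by rintro _ ⟨n, hn, rfl⟩; exact hn.1.trans hn.2))
      (hinj.mono fun _ hn => hn.1)
  have hbad : {n | ¬ P.I (ψ n) ⊆ Q.I n}.Finite :=
    Nat.finite_setOf_iff_eventually_not.2 (h.mono fun _ hn hn' => hn' hn)
  refine (hbad.union hgood).subset fun n hn => ?_
  by_cases hsub : P.I (ψ n) ⊆ Q.I n
  exacts [Or.inr ⟨hsub, hn⟩, Or.inl hsub]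

lemma downClosed_MSet (P : IntervalPartition) : DownClosed (MSet P) := by
  rintro y ⟨-, hy⟩ x hx hxy
  refine ⟨hx, (hy.union (hxy.image (idx P))).subset fun n hn => ?_⟩
  by_cases hsub : P.I n ⊆ y
  · exact Or.inl hsub
  · obtain ⟨k, hk, hky⟩ := not_subset.1 hsub
    exact Or.inr ⟨k, ⟨hn hk, hky⟩, idx_eq_of_mem_I hk⟩

lemma isMeagre_setOf_finite_eqOn (P : IntervalPartition) (z : ℕ → Bool) :
    IsMeagre {y : ℕ → Bool | {n | EqOn y z (P.I n)}.Finite} := by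
  classical
  set D : ℕ → Set (ℕ → Bool) := fun n => {y | EqOn y z (P.I n)}
  have hopen : ∀ n, IsOpen (D n) := fun n => by
    have hD : D n = ⋂ k ∈ P.I n, (fun y : ℕ → Bool => y k) ⁻¹' {z k} := by ext; simp [D, EqOn]
    rw [hD]
    exact (finite_Ico _ _).isOpen_biInter fun k _ =>
      (isOpen_discrete _).preimage (continuous_apply k)
  -- `y` is the limit of the points agreeing with `z` on the `n`-th interval and with `y` elsewhere
  have hdense : ∀ m, Dense (⋃ n ≥ m, D n) := fun m y => by
    refine mem_closure_of_tendsto (b := atTop) (f := fun n k => if k ∈ P.I n then z k else y k)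
      (tendsto_pi_nhds.2 fun k => tendsto_const_nhds.congr' ?_) ?_
    · filter_upwards [eventually_gt_atTop k] with n hn
      rw [if_neg fun hk => absurd hk.1 (not_le.2 (hn.trans_le P.mono.le_apply))]
    · filter_upwards [eventually_ge_atTop m] with n hn
      exact mem_biUnion hn fun k hk => if_pos hk
  refine mem_of_superset (countable_iInter_mem.2 fun m =>
    residual_of_dense_open (isOpen_biUnion fun n _ => hopen n) (hdense m)) fun y hy => ?_
  rw [mem_iInter] at hy
  refine Nat.frequently_atTop_iff_infinite.1 (frequently_atTop.2 fun m => ?_)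
  obtain ⟨n, hn, hyn⟩ := mem_iUnion₂.1 (hy m)
  exact ⟨n, hn, hyn⟩

lemma meagerSet_MSet (P : IntervalPartition) : MeagerSet (MSet P) := by
  refine (P.isMeagre_setOf_finite_eqOn fun _ => true).mono ?_
  rintro _ ⟨x, ⟨-, hx⟩, rfl⟩
  refine hx.subset fun n hn k hk => ?_
  simpa [chi] using hn hk

lemma MSet_mem_BM (P : IntervalPartition) : MSet P ∈ BM :=
  ⟨fun _ hx => hx.1, P.downClosed_MSet, P.meagerSet_MSet⟩

lemma MSet_subset_MSet_ofFun (h : EvMaj (FPart P) g) : MSet P ⊆ MSet (ofFun g) := by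
  refine MSet_subset_MSet (ψ := fun n => idx P ((ofFun g).e n) + 1)
    (((ofFun g).mono.tendsto_atTop.eventually h).mono fun n hn => ?_)
  have hlt : P.e (idx P ((ofFun g).e n) + 2) ≤ FPart P ((ofFun g).e n) :=
    le_FPart_iff.2 (P.mono (by omega))
  exact Ico_subset_Ico (mem_I_idx _).2.le (hlt.trans (hn.trans (lt_ofFun_e_succ le_rfl).le))

lemma compl_range_ofFun_mem_MSet (f : ℕ → ℕ) : (range (ofFun f).e)ᶜ ∈ MSet (ofFun f) := by
  refine ⟨infinite_of_injective_forall_mem (f := fun n => (ofFun f).e n + 1)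
    (fun m n hmn => (ofFun f).mono.injective (by simpa using hmn)) fun n ⟨m, hm⟩ => ?_, ?_⟩
  · rcases lt_or_ge n m with h | h
    · have := (ofFun f).mono.monotone (show n + 1 ≤ m by omega)
      have := ofFun_e_add_two_le (f := f) n
      omega
    · have := (ofFun f).mono.monotone h
      omega
  · convert finite_empty
    exact eq_empty_of_forall_notMem fun n hn => hn ((ofFun f).e_mem_I n) ⟨n, rfl⟩

lemma compl_range_ofFun_infinite_coinfinite (f : ℕ → ℕ) :
    (range (ofFun f).e)ᶜ ∈ {x : Set ℕ | x.Infinite ∧ xᶜ.Infinite} :=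
  ⟨(compl_range_ofFun_mem_MSet f).1, by
    simpa using infinite_range_of_injective (ofFun f).mono.injective⟩

lemma evMaj_FPart_of_compl_range_ofFun_mem (h : (range (ofFun f).e)ᶜ ∈ MSet Q) :
    EvMaj f (FPart Q) := by
  have hmeet : ∀ᶠ n in atTop, ∃ a, (ofFun f).e a ∈ Q.I n :=
    (Nat.finite_setOf_iff_eventually_not.1 h.2).mono fun n hn => by
      obtain ⟨_, hk, hk'⟩ := not_subset.1 hn
      obtain ⟨a, rfl⟩ := not_not.1 hk'
      exact ⟨a, hk⟩
  filter_upwards [Q.tendsto_idx.eventually ((tendsto_add_atTop_nat 1).eventually hmeet),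
    Q.tendsto_idx.eventually ((tendsto_add_atTop_nat 2).eventually hmeet)] with k ⟨a, ha⟩ ⟨b, hb⟩
  -- `k < e a`, hence `f k < e (a + 1) ≤ e b < Q.e (idx Q k + 3)`
  have hab : a < b := (ofFun f).mono.lt_iff_lt.1 (ha.2.trans_le hb.1)
  have hka : k ≤ (ofFun f).e a := ((mem_I_idx k).2.trans_le ha.1).le
  exact le_FPart_iff.2 ((lt_ofFun_e_succ hka).trans_le
    (((ofFun f).mono.monotone hab).trans hb.2.le))

lemma exists_mem_MSet_ofFun_of_evMaj {x : Set ℕ} (hx : x.Infinite) (hxc : xᶜ.Infinite) :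
    ∃ φ : ℕ → ℕ, ∀ f, EvMaj φ f → x ∈ MSet (ofFun f) := by
  choose φ hφ using hxc.exists_gt
  refine ⟨φ, fun f h => ⟨hx, Nat.finite_setOf_iff_eventually_not.2 ?_⟩⟩
  filter_upwards [(ofFun f).mono.tendsto_atTop.eventually h] with n hn hsub
  exact (hφ _).1 (hsub ⟨(hφ _).2.le, hn.trans_lt (lt_ofFun_e_succ le_rfl)⟩)

end IntervalPartition

open IntervalPartition

lemma Dense.exists_forall_eqOn_Ico_mem {U : Set (ℕ → Bool)} (hd : Dense U) (hU : IsOpen U)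
    (N : ℕ) : ∀ (τ₀ : ℕ → Bool) (M₀ : ℕ), N ≤ M₀ → ∃ τ M, M₀ ≤ M ∧ EqOn τ τ₀ (Ico N M₀) ∧
      ∀ h, EqOn h τ (Ico N M) → h ∈ U := by
  induction N with
  | zero =>
    intro τ₀ M₀ _
    obtain ⟨g, hg, hgU⟩ := hd.inter_open_nonempty _ (PiNat.isOpen_cylinder _ τ₀ M₀)
      ⟨τ₀, PiNat.self_mem_cylinder _ _⟩
    obtain ⟨_, ⟨x, M, rfl⟩, hgM, hMU⟩ :=
      (PiNat.isTopologicalBasis_cylinders _).exists_subset_of_mem_open hgU hU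
    rw [PiNat.mem_cylinder_iff_eq] at hgM
    refine ⟨g, max M M₀, le_max_right _ _, fun i hi => PiNat.mem_cylinder_iff.1 hg i hi.2,
      fun h hh => hMU ?_⟩
    rw [← hgM]
    exact fun i hi => hh ⟨i.zero_le, lt_max_of_lt_left hi⟩
  | succ N ih =>
    -- serve first the points with `h N = false`, then extend to serve those with `h N = true`
    intro τ₀ M₀ hM₀
    obtain ⟨τ₁, M₁, hM₁, hτ₁, hU₁⟩ := ih (Function.update τ₀ N false) M₀ (by omega)
    obtain ⟨τ₂, M₂, hM₂, hτ₂, hU₂⟩ := ih (Function.update τ₁ N true) M₁ (by omega)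
    have hτ₂₁ : ∀ i, N < i → i < M₁ → τ₂ i = τ₁ i := fun i hi hi' => by
      rw [hτ₂ ⟨hi.le, hi'⟩, Function.update_of_ne hi.ne']
    refine ⟨τ₂, M₂, hM₁.trans hM₂, fun i ⟨hi, hi'⟩ => ?_, fun h hh => ?_⟩
    · rw [hτ₂₁ i hi (hi'.trans_le hM₁), hτ₁ ⟨by omega, hi'⟩, Function.update_of_ne (by omega)]
    · cases hN : h N
      · refine hU₁ h fun i ⟨hi, hi'⟩ => ?_
        rcases eq_or_ne i N with rfl | hiN
        · rw [hN, hτ₁ ⟨le_rfl, by omega⟩, Function.update_self]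
        · rw [hh ⟨by omega, hi'.trans_le hM₂⟩, hτ₂₁ i (by omega) hi']
      · refine hU₂ h fun i ⟨hi, hi'⟩ => ?_
        rcases eq_or_ne i N with rfl | hiN
        · rw [hN, hτ₂ ⟨le_rfl, by omega⟩, Function.update_self]
        · exact hh ⟨by omega, hi'⟩

lemma IsMeagre.exists_isOpen_dense_seq {X : Type*} [TopologicalSpace X] {s : Set X}
    (hs : IsMeagre s) :
    ∃ U : ℕ → Set X, (∀ m, IsOpen (U m)) ∧ (∀ m, Dense (U m)) ∧ ∀ y ∈ s, ∃ m, y ∉ U m := by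
  obtain ⟨S, hSo, hSd, hSc, hS⟩ := mem_residual_iff.1 hs
  obtain ⟨U, hU⟩ := (hSc.insert Set.univ).exists_eq_range (insert_nonempty _ _)
  have hUS : ∀ m, U m ∈ insert Set.univ S := fun m => hU ▸ mem_range_self m
  refine ⟨U, fun m => ?_, fun m => ?_, fun y hy => ?_⟩
  · rcases hUS m with h | h
    exacts [h ▸ isOpen_univ, hSo _ h]
  · rcases hUS m with h | h
    exacts [h ▸ dense_univ, hSd _ h]
  · by_contra! h
    refine hS (fun t ht => ?_) hy
    obtain ⟨m, rfl⟩ : t ∈ range U := hU ▸ mem_insert_of_mem _ ht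
    exact h m

lemma IsMeagre.exists_intervalPartition {s : Set (ℕ → Bool)} (hs : IsMeagre s) :
    ∃ (P : IntervalPartition) (z : ℕ → Bool), (∀ n, z (P.e n) = true) ∧
      ∀ y ∈ s, {n | EqOn y z (P.I n)}.Finite := by
  obtain ⟨U, hUo, hUd, hsU⟩ := hs.exists_isOpen_dense_seq
  -- the `n`-th interval carries a block forcing membership in `U 0 ∩ ⋯ ∩ U n`
  choose τ M hM hτ hτU using fun n N => Dense.exists_forall_eqOn_Ico_mem
    (dense_biInter_of_isOpen (fun m _ => hUo m) (to_countable (Iic n)) fun m _ => hUd m)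
    ((finite_Iic n).isOpen_biInter fun m _ => hUo m) N (fun _ => true) (N + 1) N.le_succ
  let P := IntervalPartition.ofStep M fun n N => hM n N
  refine ⟨P, fun k => τ (idx P k) (P.e (idx P k)) k, fun n => ?_, fun y hy => ?_⟩
  · show τ (idx P (P.e n)) (P.e (idx P (P.e n))) (P.e n) = true
    rw [idx_eq_of_mem_I (P.e_mem_I n)]
    exact hτ n (P.e n) ⟨le_rfl, Nat.lt_succ_self _⟩
  · obtain ⟨m, hm⟩ := hsU y hy
    refine (finite_Iio m).subset fun n hn => mem_Iio.2 (not_le.1 fun hmn => hm ?_)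
    have hyV := hτU n (P.e n) y fun k hk => by
      rw [hn hk]
      show τ (idx P k) (P.e (idx P k)) k = _
      rw [idx_eq_of_mem_I (P := P) hk]
    exact mem_iInter₂.1 hyV m hmn

lemma exists_subset_MSet_of_mem_BM {X : Set (Set ℕ)} (hX : X ∈ BM) :
    ∃ P : IntervalPartition, X ⊆ MSet P := by
  classical
  obtain ⟨P, z, hz, hfin⟩ := hX.2.2.exists_intervalPartition
  refine ⟨P, fun x hx => ⟨hX.1 hx, not_infinite.1 fun hA => ?_⟩⟩
  -- on the intervals included in `x`, shrink `x` to a copy of `z`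
  set y := x \ {k | P.I (idx P k) ⊆ x ∧ z k = false}
  have hyz : {n | P.I n ⊆ x} ⊆ {n | EqOn (chi y) z (P.I n)} := fun n (hn : P.I n ⊆ x) k hk => by
    cases hzk : z k <;> simp [chi, y, idx_eq_of_mem_I hk, hn, hn hk, hzk]
  have hy : y.Infinite := (hA.image P.mono.injective.injOn).mono <| by
    rintro _ ⟨n, hn, rfl⟩
    exact ⟨hn (P.e_mem_I n), fun h => by simp [hz] at h⟩
  have hyX : y ∈ X := hX.2.1 x hx y hy (by simp [y])
  exact hA ((hfin _ ⟨y, hyX, rfl⟩).subset hyz)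

lemma exists_bound_of_mem_BM {X : Set (Set ℕ)} (hX : X ∈ BM) :
    ∃ φ : ℕ → ℕ, (∀ f, (range (ofFun f).e)ᶜ ∈ X → EvMaj f φ) ∧
      ∀ g, EvMaj φ g → X ⊆ MSet (ofFun g) := by
  obtain ⟨Q, hQ⟩ := exists_subset_MSet_of_mem_BM hX
  exact ⟨FPart Q, fun f hf => evMaj_FPart_of_compl_range_ofFun_mem (hQ hf),
    fun g hg => hQ.trans (MSet_subset_MSet_ofFun hg)⟩

lemma DownClosed.sUnion {S : Set (Set (Set ℕ))} (h : ∀ X ∈ S, DownClosed X) :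
    DownClosed (⋃₀ S) := by
  rintro y ⟨X, hX, hy⟩ x hx hxy
  exact ⟨X, hX, h X hX y hy x hx hxy⟩

lemma mem_BM_of_subset {X Y : Set (Set ℕ)} (hY : Y ∈ BM) (hXY : X ⊆ Y) (hX : DownClosed X) :
    X ∈ BM :=
  ⟨hXY.trans hY.1, hX, hY.2.2.mono (image_mono hXY)⟩

lemma exists_unbounded_family :
    ∃ F : Set (ℕ → ℕ), #F = bNum ∧ ∀ g : ℕ → ℕ, ∃ f ∈ F, ¬ EvMaj f g :=
  (csInf_mem ⟨_, univ, rfl, fun g => ⟨g + 1, mem_univ _, fun h => by simpa using h.exists⟩⟩ :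
    bNum ∈ _)

lemma exists_dominating_family :
    ∃ F : Set (ℕ → ℕ), #F = dNum ∧ ∀ g : ℕ → ℕ, ∃ f ∈ F, EvMaj g f :=
  (csInf_mem ⟨_, univ, rfl, fun g => ⟨g, mem_univ _, Eventually.of_forall fun _ => le_rfl⟩⟩ :
    dNum ∈ _)

lemma exists_evMaj_of_mk_lt_bNum {F : Set (ℕ → ℕ)} (h : #F < bNum) :
    ∃ g : ℕ → ℕ, ∀ f ∈ F, EvMaj f g := by
  by_contra! hF
  exact (csInf_le' ⟨F, rfl, hF⟩ : bNum ≤ #F).not_gt h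

lemma exists_not_evMaj_of_mk_lt_dNum {F : Set (ℕ → ℕ)} (h : #F < dNum) :
    ∃ g : ℕ → ℕ, ∀ f ∈ F, ¬ EvMaj g f := by
  by_contra! hF
  exact (csInf_le' ⟨F, rfl, hF⟩ : dNum ≤ #F).not_gt h

lemma addBM_eq_bNum : addBM = bNum := by
  obtain ⟨F, hF, hunb⟩ := exists_unbounded_family
  refine csInf_eq_of_mem_of_le (c := #((fun f => MSet (ofFun f)) '' F))
    ⟨_, image_subset_iff.2 fun f _ => (ofFun f).MSet_mem_BM, rfl, fun hS => ?_⟩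
    (mk_image_le.trans hF.le) ?_
  · obtain ⟨φ, hφ, -⟩ := exists_bound_of_mem_BM hS
    obtain ⟨f, hf, hfφ⟩ := hunb φ
    exact hfφ (hφ f (subset_sUnion_of_mem (mem_image_of_mem _ hf) (compl_range_ofFun_mem_MSet f)))
  · rintro _ ⟨S, hS, rfl, hSBM⟩
    by_contra! hlt
    choose! φ hφ using fun X (hX : X ∈ S) => exists_bound_of_mem_BM (hS hX)
    obtain ⟨g, hg⟩ := exists_evMaj_of_mk_lt_bNum ((mk_image_le (f := φ) (s := S)).trans_lt hlt)
    exact hSBM (mem_BM_of_subset (ofFun g).MSet_mem_BM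
      (sUnion_subset fun X hX => (hφ X hX).2 g (hg _ (mem_image_of_mem _ hX)))
      (DownClosed.sUnion fun X hX => (hS hX).2.1))

lemma unifBM_eq_bNum : unifBM = bNum := by
  obtain ⟨F, hF, hunb⟩ := exists_unbounded_family
  refine csInf_eq_of_mem_of_le (c := #((fun f => (range (ofFun f).e)ᶜ) '' F))
    ⟨_, forall_mem_image.2 fun f _ => compl_range_ofFun_infinite_coinfinite f, rfl,
      fun X hX hSX => ?_⟩ (mk_image_le.trans hF.le) ?_
  · obtain ⟨φ, hφ, -⟩ := exists_bound_of_mem_BM hX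
    obtain ⟨f, hf, hfφ⟩ := hunb φ
    exact hfφ (hφ f (hSX (mem_image_of_mem _ hf)))
  · rintro _ ⟨T, hT, rfl, hTBM⟩
    by_contra! hlt
    choose! φ hφ using fun x hx => exists_mem_MSet_ofFun_of_evMaj (hT x hx).1 (hT x hx).2
    obtain ⟨g, hg⟩ := exists_evMaj_of_mk_lt_bNum ((mk_image_le (f := φ) (s := T)).trans_lt hlt)
    exact hTBM _ (ofFun g).MSet_mem_BM fun x hx => hφ x hx g (hg _ (mem_image_of_mem _ hx))

lemma covBM_eq_dNum : covBM = dNum := by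
  obtain ⟨F, hF, hdom⟩ := exists_dominating_family
  refine csInf_eq_of_mem_of_le (c := #((fun f => MSet (ofFun f)) '' F))
    ⟨_, image_subset_iff.2 fun f _ => (ofFun f).MSet_mem_BM, rfl, fun x ⟨hx, hxc⟩ => ?_⟩
    (mk_image_le.trans hF.le) ?_
  · obtain ⟨φ, hφ⟩ := exists_mem_MSet_ofFun_of_evMaj hx hxc
    obtain ⟨f, hf, hφf⟩ := hdom φ
    exact ⟨_, mem_image_of_mem _ hf, hφ f hφf⟩
  · rintro _ ⟨T, hT, rfl, hcov⟩
    by_contra! hlt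
    choose! φ hφ using fun X (hX : X ∈ T) => exists_bound_of_mem_BM (hT hX)
    obtain ⟨g, hg⟩ := exists_not_evMaj_of_mk_lt_dNum ((mk_image_le (f := φ) (s := T)).trans_lt hlt)
    obtain ⟨X, hX, hgX⟩ := hcov (compl_range_ofFun_infinite_coinfinite g)
    exact hg _ (mem_image_of_mem _ hX) ((hφ X hX).1 g hgX)

lemma cofBM_eq_dNum : cofBM = dNum := by
  obtain ⟨F, hF, hdom⟩ := exists_dominating_family
  refine csInf_eq_of_mem_of_le (c := #((fun f => MSet (ofFun f)) '' F))
    ⟨_, image_subset_iff.2 fun f _ => (ofFun f).MSet_mem_BM, rfl, fun X hX => ?_⟩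
    (mk_image_le.trans hF.le) ?_
  · obtain ⟨φ, -, hφ⟩ := exists_bound_of_mem_BM hX
    obtain ⟨f, hf, hφf⟩ := hdom φ
    exact ⟨_, mem_image_of_mem _ hf, hφ f hφf⟩
  · rintro _ ⟨C, hC, rfl, hcof⟩
    choose! φ hφ using fun X (hX : X ∈ C) => exists_bound_of_mem_BM (hC hX)
    refine (csInf_le' ⟨φ '' C, rfl, fun g => ?_⟩ : dNum ≤ #(φ '' C)).trans mk_image_le
    obtain ⟨Y, hY, hgY⟩ := hcof _ (ofFun g).MSet_mem_BM
    exact ⟨φ Y, mem_image_of_mem _ hY, (hφ Y hY).1 g (hgY (compl_range_ofFun_mem_MSet g))⟩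

/-- Theorem 3: add(B_M) = unif(B_M) = 𝔟 and cov(B_M) = cof(B_M) = 𝔡. -/
theorem stmt11 : addBM = bNum ∧ unifBM = bNum ∧ covBM = dNum ∧ cofBM = dNum :=
  ⟨addBM_eq_bNum, unifBM_eq_bNum, covBM_eq_dNum, cofBM_eq_dNum⟩
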